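/- arXiv:1501.01126 — 3 statements merged into one kernel-verified Lean document; each statement's English description precedes it below -/
import Mathlib

section
/- For an integrable random variable X and δ ∈ (0,1), CVaR_δ(X) equals the optimal value of the convex minimization problem min_{α∈R} [ α + (1/(1-δ)) E[(X - α)⁺] ], and the infimum is attained at α = VaR_δ(X). -/
open MeasureTheory Set

/-- `VaR_δ(X) = inf {t : P(X ≥ t) ≤ 1 - δ}`. -/
noncomputable def VaR {Ω : Type*} [MeasurableSpace Ω] (P : Measure Ω) (δ : ℝ)
    (X : Ω → ℝ) : ℝ :=
  sInf {t : ℝ | P {ω | t ≤ X ω} ≤ ENNReal.ofReal (1 - δ)}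

/-- `CVaR_δ(X) = (1/(1-δ)) ∫_δ^1 VaR_s(X) ds`. -/
noncomputable def CVaR {Ω : Type*} [MeasurableSpace Ω] (P : Measure Ω) (δ : ℝ)
    (X : Ω → ℝ) : ℝ :=
  (1 - δ)⁻¹ * ∫ s in Set.Ioc δ 1, VaR P s X

/-!
Regard `s ↦ VaR_s(X)` on `((δ, 1), Lebesgue)` as a random variable. Its upper tails are dominated
by those of `X`: `λ {s ∈ (δ, 1) | t < VaR_s} ≤ P (t ≤ X)` for every `t`, because `t < VaR_s` forces
`1 - s < P (t ≤ X)`; conversely `P (t < X) ≤ λ {s ∈ (δ, 1) | t ≤ VaR_s}` once `t > VaR_δ`. By the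
layer-cake formula, `∫_δ^1 (VaR_s - α)⁺ ds ≤ E (X - α)⁺` for every `α`, with equality at
`α = VaR_δ`. Integrating `x ≤ α + (x - α)⁺` over `(δ, 1)`, an equality for `α = VaR_δ` since
`VaR_s ≥ VaR_δ` there, gives both claims.
-/

open Filter Topology
open scoped ENNReal

section LayerCake

variable {α β : Type*} [MeasurableSpace α] [MeasurableSpace β] {μ : Measure α} {ν : Measure β}

lemma lintegral_ofReal_sub_eq_lintegral_meas_lt {f : α → ℝ} (hf : AEMeasurable f μ) (c : ℝ) :
    ∫⁻ x, ENNReal.ofReal (f x - c) ∂μ = ∫⁻ t in Ioi 0, μ {x | c + t < f x} := by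
  have h := lintegral_eq_lintegral_meas_lt μ (ae_of_all _ fun x => le_max_right (f x - c) 0)
    ((hf.sub_const c).max aemeasurable_const)
  simp only [ENNReal.ofReal_max, ENNReal.ofReal_zero, max_eq_left, zero_le] at h
  rw [h]
  refine setLIntegral_congr_fun measurableSet_Ioi fun t (ht : 0 < t) => ?_
  simp only [lt_max_iff, ht.not_gt, or_false, lt_sub_iff_add_lt']

lemma lintegral_ofReal_sub_eq_lintegral_meas_le {f : α → ℝ} (hf : AEMeasurable f μ) (c : ℝ) :
    ∫⁻ x, ENNReal.ofReal (f x - c) ∂μ = ∫⁻ t in Ioi 0, μ {x | c + t ≤ f x} := by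
  have h := lintegral_eq_lintegral_meas_le μ (ae_of_all _ fun x => le_max_right (f x - c) 0)
    ((hf.sub_const c).max aemeasurable_const)
  simp only [ENNReal.ofReal_max, ENNReal.ofReal_zero, max_eq_left, zero_le] at h
  rw [h]
  refine setLIntegral_congr_fun measurableSet_Ioi fun t (ht : 0 < t) => ?_
  simp only [le_max_iff, ht.not_ge, or_false, le_sub_iff_add_le']

lemma lintegral_ofReal_sub_le_of_meas_lt_le {f : α → ℝ} {g : β → ℝ} (hf : AEMeasurable f μ)
    (hg : AEMeasurable g ν) {c : ℝ} (h : ∀ t, c < t → μ {x | t < f x} ≤ ν {y | t ≤ g y}) :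
    ∫⁻ x, ENNReal.ofReal (f x - c) ∂μ ≤ ∫⁻ y, ENNReal.ofReal (g y - c) ∂ν := by
  rw [lintegral_ofReal_sub_eq_lintegral_meas_lt hf, lintegral_ofReal_sub_eq_lintegral_meas_le hg]
  exact setLIntegral_mono' measurableSet_Ioi fun t ht => h _ (lt_add_of_pos_right c ht)

lemma integral_max_sub_eq_toReal_lintegral {f : α → ℝ} (hf : AEMeasurable f μ) (c : ℝ) :
    ∫ x, max (f x - c) 0 ∂μ = (∫⁻ x, ENNReal.ofReal (f x - c) ∂μ).toReal := by
  rw [integral_eq_lintegral_of_nonneg_ae (f := fun x => max (f x - c) 0)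
    (ae_of_all _ fun x => le_max_right _ _)
    ((hf.sub_const c).max aemeasurable_const).aestronglyMeasurable]
  simp only [ENNReal.ofReal_max, ENNReal.ofReal_zero, max_eq_left, zero_le]

lemma MeasureTheory.Integrable.lintegral_ofReal_sub_ne_top [IsFiniteMeasure μ] {f : α → ℝ}
    (hf : Integrable f μ) (c : ℝ) : ∫⁻ x, ENNReal.ofReal (f x - c) ∂μ ≠ ∞ :=
  ((lintegral_ofReal_le_lintegral_enorm _).trans_lt (hf.sub (integrable_const c)).2).ne

end LayerCake

lemma volume_Ioo_one_sub_toReal {m : ℝ≥0∞} (hm : m ≠ ∞) : volume (Ioo (1 - m.toReal) 1) = m := by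
  rw [Real.volume_Ioo, sub_sub_cancel, ENNReal.ofReal_toReal hm]

section VaR

variable {Ω : Type*} [MeasurableSpace Ω] {P : Measure Ω} {X : Ω → ℝ} {s s' t δ : ℝ}

lemma tendsto_measure_setOf_le_atTop [IsFiniteMeasure P] (hX : AEMeasurable X P) :
    Tendsto (fun t => P {ω | t ≤ X ω}) atTop (𝓝 0) := by
  have h := tendsto_measure_iInter_atTop (μ := P) (s := fun t : ℝ => {ω | t ≤ X ω})
    (fun _ => hX.nullMeasurable measurableSet_Ici) (fun _ _ htt' _ hω => htt'.trans hω)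
    ⟨0, measure_ne_top _ _⟩
  rwa [iInter_eq_empty_iff.2 fun ω => ⟨X ω + 1, (lt_add_one (X ω)).not_ge⟩, measure_empty] at h

lemma tendsto_measure_setOf_le_atBot :
    Tendsto (fun t => P {ω | t ≤ X ω}) atBot (𝓝 (P univ)) := by
  have h := tendsto_measure_iUnion_atBot (μ := P) (s := fun t : ℝ => {ω | t ≤ X ω})
    (fun _ _ htt' _ hω => htt'.trans hω)
  rwa [iUnion_eq_univ_iff.2 fun ω => ⟨X ω, le_refl (X ω)⟩] at h

lemma bddBelow_VaR_set [IsProbabilityMeasure P] (hs : 0 < s) :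
    BddBelow {t | P {ω | t ≤ X ω} ≤ ENNReal.ofReal (1 - s)} := by
  have hlt : ENNReal.ofReal (1 - s) < P univ := by
    rw [measure_univ]
    exact ENNReal.ofReal_lt_one.2 (by linarith)
  obtain ⟨t₀, ht₀⟩ := (tendsto_measure_setOf_le_atBot.eventually_const_lt hlt).exists
  exact ⟨t₀, fun t ht => le_of_not_gt fun htt₀ =>
    (ht₀.trans_le (measure_mono fun ω hω => htt₀.le.trans hω)).not_ge ht⟩

lemma VaR_set_nonempty [IsFiniteMeasure P] (hX : AEMeasurable X P) (hs : s < 1) :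
    {t | P {ω | t ≤ X ω} ≤ ENNReal.ofReal (1 - s)}.Nonempty :=
  ((tendsto_measure_setOf_le_atTop hX).eventually_lt_const
    (ENNReal.ofReal_pos.2 (sub_pos.2 hs))).exists.imp fun _ => le_of_lt

lemma lt_measure_of_lt_VaR [IsProbabilityMeasure P] (hs : 0 < s) (ht : t < VaR P s X) :
    ENNReal.ofReal (1 - s) < P {ω | t ≤ X ω} :=
  lt_of_not_ge fun h => ht.not_ge (csInf_le (bddBelow_VaR_set hs) h)

lemma le_VaR_of_lt_measure [IsFiniteMeasure P] (hX : AEMeasurable X P) (hs : s < 1)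
    (h : ENNReal.ofReal (1 - s) < P {ω | t ≤ X ω}) : t ≤ VaR P s X :=
  le_csInf (VaR_set_nonempty hX hs) fun _ hu => le_of_not_gt fun hut =>
    h.not_ge ((measure_mono fun _ hω => hut.le.trans hω).trans hu)

-- `0 < s` matters: for `s ≤ 0` the defining set is all of `ℝ` and `VaR P s X` is the junk `0`.
lemma VaR_mono [IsProbabilityMeasure P] (hX : AEMeasurable X P) (hs : 0 < s) (hs' : s' < 1)
    (hss' : s ≤ s') : VaR P s X ≤ VaR P s' X :=
  le_of_forall_lt_imp_le_of_dense fun _ ht => le_VaR_of_lt_measure hX hs' <|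
    (ENNReal.ofReal_le_ofReal (by linarith)).trans_lt (lt_measure_of_lt_VaR hs ht)

lemma aemeasurable_VaR [IsProbabilityMeasure P] (hX : AEMeasurable X P) (hδ : 0 ≤ δ) :
    AEMeasurable (fun s => VaR P s X) (volume.restrict (Ioo δ 1)) :=
  aemeasurable_restrict_of_monotoneOn measurableSet_Ioo fun _ hs _ hs' =>
    VaR_mono hX (hδ.trans_lt hs.1) hs'.2

lemma volume_restrict_lt_VaR_le_measure [IsProbabilityMeasure P] (hδ : 0 ≤ δ) (t : ℝ) :
    volume.restrict (Ioo δ 1) {s | t < VaR P s X} ≤ P {ω | t ≤ X ω} := by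
  rw [Measure.restrict_apply' measurableSet_Ioo]
  calc volume ({s | t < VaR P s X} ∩ Ioo δ 1)
      ≤ volume (Ioo (1 - (P {ω | t ≤ X ω}).toReal) 1) := by
        refine measure_mono fun s ⟨hts, hs⟩ => ⟨?_, hs.2⟩
        have := (ENNReal.ofReal_lt_iff_lt_toReal (by linarith [hs.2]) (measure_ne_top _ _)).1
          (lt_measure_of_lt_VaR (hδ.trans_lt hs.1) hts)
        linarith
    _ = P {ω | t ≤ X ω} := volume_Ioo_one_sub_toReal (measure_ne_top _ _)

lemma measure_lt_le_volume_restrict_le_VaR [IsProbabilityMeasure P] (hX : AEMeasurable X P)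
    (hδ : δ < 1) (ht : VaR P δ X < t) :
    P {ω | t < X ω} ≤ volume.restrict (Ioo δ 1) {s | t ≤ VaR P s X} := by
  have hsub : {ω | t < X ω} ⊆ {ω | t ≤ X ω} := fun _ (hω : t < X _) => hω.le
  have htail : (P {ω | t < X ω}).toReal ≤ 1 - δ :=
    ENNReal.toReal_le_of_le_ofReal (by linarith) <| (measure_mono hsub).trans <|
      le_of_not_gt fun h => ht.not_ge (le_VaR_of_lt_measure hX hδ h)
  rw [Measure.restrict_apply' measurableSet_Ioo]
  calc P {ω | t < X ω} = volume (Ioo (1 - (P {ω | t < X ω}).toReal) 1) :=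
        (volume_Ioo_one_sub_toReal (measure_ne_top _ _)).symm
    _ ≤ volume ({s | t ≤ VaR P s X} ∩ Ioo δ 1) := by
        refine measure_mono fun s hs =>
          ⟨le_VaR_of_lt_measure hX hs.2 ?_, by linarith [hs.1], hs.2⟩
        refine (ENNReal.ofReal_lt_iff_lt_toReal (by linarith [hs.2]) (measure_ne_top _ _)).2 ?_
          |>.trans_le (measure_mono hsub)
        linarith [hs.1]

end VaR

section CVaR

variable {Ω : Type*} [MeasurableSpace Ω] {P : Measure Ω} [IsProbabilityMeasure P] {X : Ω → ℝ}
  {δ : ℝ}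

lemma lintegral_ofReal_VaR_sub_le (hX : AEMeasurable X P) (hδ : 0 ≤ δ) (α : ℝ) :
    ∫⁻ s in Ioo δ 1, ENNReal.ofReal (VaR P s X - α) ≤ ∫⁻ ω, ENNReal.ofReal (X ω - α) ∂P :=
  lintegral_ofReal_sub_le_of_meas_lt_le (aemeasurable_VaR hX hδ) hX fun t _ =>
    volume_restrict_lt_VaR_le_measure hδ t

lemma lintegral_ofReal_VaR_sub_VaR (hX : AEMeasurable X P) (hδ : δ ∈ Ioo 0 1) :
    ∫⁻ s in Ioo δ 1, ENNReal.ofReal (VaR P s X - VaR P δ X) =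
      ∫⁻ ω, ENNReal.ofReal (X ω - VaR P δ X) ∂P :=
  le_antisymm (lintegral_ofReal_VaR_sub_le hX hδ.1.le _) <|
    lintegral_ofReal_sub_le_of_meas_lt_le hX (aemeasurable_VaR hX hδ.1.le) fun _ ht =>
      measure_lt_le_volume_restrict_le_VaR hX hδ.2 ht

lemma ae_VaR_le_VaR (hX : AEMeasurable X P) (hδ : 0 < δ) :
    ∀ᵐ s ∂volume.restrict (Ioo δ 1), VaR P δ X ≤ VaR P s X :=
  (ae_restrict_iff' measurableSet_Ioo).2 <| ae_of_all _ fun _ hs => VaR_mono hX hδ hs.2 hs.1.le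

lemma integrableOn_VaR (hX : Integrable X P) (hδ : δ ∈ Ioo 0 1) :
    IntegrableOn (fun s => VaR P s X) (Ioo δ 1) := by
  have hsub : Integrable (fun s => VaR P s X - VaR P δ X) (volume.restrict (Ioo δ 1)) := by
    refine (lintegral_ofReal_ne_top_iff_integrable
      ((aemeasurable_VaR hX.aemeasurable hδ.1.le).sub_const _).aestronglyMeasurable
      ((ae_VaR_le_VaR hX.aemeasurable hδ.1).mono fun _ => sub_nonneg.2)).1 ?_
    rw [lintegral_ofReal_VaR_sub_VaR hX.aemeasurable hδ]
    exact hX.lintegral_ofReal_sub_ne_top _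
  exact (hsub.add (integrable_const (VaR P δ X))).congr (ae_of_all _ fun _ => sub_add_cancel _ _)

lemma integral_VaR_sub_le (hX : Integrable X P) (hδ : δ ∈ Ioo 0 1) (α : ℝ) :
    ∫ s in Ioo δ 1, (VaR P s X - α) ≤ ∫ ω, max (X ω - α) 0 ∂P := by
  have hint := (integrableOn_VaR hX hδ).sub (integrable_const α)
  calc ∫ s in Ioo δ 1, (VaR P s X - α) ≤ ∫ s in Ioo δ 1, max (VaR P s X - α) 0 :=
        integral_mono hint hint.pos_part fun _ => le_max_left _ _
    _ = (∫⁻ s in Ioo δ 1, ENNReal.ofReal (VaR P s X - α)).toReal :=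
        integral_max_sub_eq_toReal_lintegral (aemeasurable_VaR hX.aemeasurable hδ.1.le) α
    _ ≤ (∫⁻ ω, ENNReal.ofReal (X ω - α) ∂P).toReal :=
        ENNReal.toReal_mono (hX.lintegral_ofReal_sub_ne_top α)
          (lintegral_ofReal_VaR_sub_le hX.aemeasurable hδ.1.le α)
    _ = ∫ ω, max (X ω - α) 0 ∂P := (integral_max_sub_eq_toReal_lintegral hX.aemeasurable α).symm

lemma integral_VaR_sub_VaR (hX : Integrable X P) (hδ : δ ∈ Ioo 0 1) :
    ∫ s in Ioo δ 1, (VaR P s X - VaR P δ X) = ∫ ω, max (X ω - VaR P δ X) 0 ∂P := by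
  rw [integral_max_sub_eq_toReal_lintegral hX.aemeasurable,
    ← lintegral_ofReal_VaR_sub_VaR hX.aemeasurable hδ]
  exact integral_eq_lintegral_of_nonneg_ae
    ((ae_VaR_le_VaR hX.aemeasurable hδ.1).mono fun _ => sub_nonneg.2)
    ((aemeasurable_VaR hX.aemeasurable hδ.1.le).sub_const _).aestronglyMeasurable

end CVaR

lemma CVaR_eq_add_integral_VaR_sub {Ω : Type*} [MeasurableSpace Ω] {P : Measure Ω} {X : Ω → ℝ}
    {δ : ℝ} (hδ : δ < 1) (hq : IntegrableOn (fun s => VaR P s X) (Ioo δ 1)) (α : ℝ) :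
    CVaR P δ X = α + (1 - δ)⁻¹ * ∫ s in Ioo δ 1, (VaR P s X - α) := by
  have h1δ : 1 - δ ≠ 0 := by linarith
  rw [CVaR, integral_Ioc_eq_integral_Ioo, integral_sub hq (integrable_const α), setIntegral_const,
    Real.volume_real_Ioo_of_le hδ.le, smul_eq_mul]
  field_simp
  ring

theorem CVaR_eq_rockafellar_uryasev_general {Ω : Type*} [MeasurableSpace Ω] (P : Measure Ω)
    [IsProbabilityMeasure P] (X : Ω → ℝ) (hX : Integrable X P)
    (δ : ℝ) (hδ : δ ∈ Set.Ioo (0 : ℝ) 1) :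
    (∀ α : ℝ, CVaR P δ X ≤ α + (1 - δ)⁻¹ * ∫ ω, max (X ω - α) 0 ∂P) ∧
      VaR P δ X + (1 - δ)⁻¹ * (∫ ω, max (X ω - VaR P δ X) 0 ∂P) = CVaR P δ X := by
  have hCVaR := CVaR_eq_add_integral_VaR_sub hδ.2 (integrableOn_VaR hX hδ)
  have hpos : 0 ≤ (1 - δ)⁻¹ := inv_nonneg.2 (sub_nonneg.2 hδ.2.le)
  refine ⟨fun α => ?_, ?_⟩
  · rw [hCVaR α]
    gcongr
    exact integral_VaR_sub_le hX hδ α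
  · rw [hCVaR (VaR P δ X), integral_VaR_sub_VaR hX hδ]

/-- Rockafellar–Uryasev: `CVaR_δ(X)` equals the optimal value of
`min_α [α + (1/(1-δ)) E[(X-α)⁺]]`, and the minimum is attained at `α = VaR_δ(X)`. -/
theorem CVaR_eq_rockafellar_uryasev {Ω : Type*} [MeasurableSpace Ω] (P : Measure Ω)
    [IsProbabilityMeasure P] (X : Ω → ℝ) (hX : Integrable X P) (hXm : Measurable X)
    (δ : ℝ) (hδ : δ ∈ Set.Ioo (0 : ℝ) 1) :
    (∀ α : ℝ, CVaR P δ X ≤ α + (1 - δ)⁻¹ * ∫ ω, max (X ω - α) 0 ∂P) ∧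
      VaR P δ X + (1 - δ)⁻¹ * (∫ ω, max (X ω - VaR P δ X) 0 ∂P) = CVaR P δ X :=
  CVaR_eq_rockafellar_uryasev_general P X hX δ hδ
end

section
/- Let (x*_VaR, γ*_VaR) be optimal for the VaR-Expectation problem min_{x∈X} VaR_δ(E_{ξ∼F}[H(x,ξ)]) and let (x*_DR, γ*_DR) be optimal for the distributionally robust problem min_{x∈X} max_{F∈F_DR} E_{ξ∼F}[H(x,ξ)], where F_DR satisfies P₁(F ∉ F_DR) ≤ 1-δ. Then γ*_VaR ≤ γ*_DR: the VaR-Expectation model is no more conservative than any distributionally robust model with a fixed distribution set of coverage δ. -/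
open MeasureTheory Set

/- A fixed set `A` of coverage `δ` makes every level above `sup_A Z` admissible in the infimum defining
`VaR_δ Z`, since the superlevel set `{t ≤ Z}` then lies in `Aᶜ`; hence `VaR_δ Z ≤ sup_A Z`.
Applied to `Z = E_F[H(x*_DR, ·)]`, optimality of `x*_VaR` gives `γ*_VaR ≤ VaR_δ Z ≤ γ*_DR`. -/

section ValueAtRisk

variable {Ω : Type*} [MeasurableSpace Ω] (P : Measure Ω) {δ : ℝ} (Z : Ω → ℝ)

/-- The superlevel sets `{-m ≤ Z}` exhaust `Ω`, so their measures eventually exceed `1 - δ`. -/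
theorem bddBelow_VaR_levels (hP : ENNReal.ofReal (1 - δ) < P univ) :
    BddBelow {t : ℝ | P {ω | t ≤ Z ω} ≤ ENNReal.ofReal (1 - δ)} := by
  have hmono : Monotone fun m : ℕ => {ω | -(m : ℝ) ≤ Z ω} := fun a b hab =>
    ofPred_subset_ofPred.mpr fun _ => (neg_le_neg (Nat.cast_le.mpr hab)).trans
  have hexhaust : ⋃ m : ℕ, {ω | -(m : ℝ) ≤ Z ω} = univ :=
    eq_univ_of_forall fun ω =>
      mem_iUnion.mpr ((exists_nat_ge (-Z ω)).imp fun _ hm => neg_le.mp hm)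
  have htendsto := tendsto_measure_iUnion_atTop (μ := P) hmono
  rw [hexhaust] at htendsto
  obtain ⟨m, hm⟩ := ((tendsto_order.1 htendsto).1 _ hP).exists
  refine ⟨-(m : ℝ), fun t ht => le_of_not_gt fun htm => ?_⟩
  exact (measure_mono fun ω (hω : -(m : ℝ) ≤ Z ω) => htm.le.trans hω).trans ht |>.not_gt hm

theorem VaR_le_of_forall_lt (hP : ENNReal.ofReal (1 - δ) < P univ) {c : ℝ}
    (hc : ∀ t, c < t → P {ω | t ≤ Z ω} ≤ ENNReal.ofReal (1 - δ)) : VaR P δ Z ≤ c :=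
  calc VaR P δ Z ≤ sInf (Ioi c) :=
        csInf_le_csInf (bddBelow_VaR_levels P Z hP) nonempty_Ioi hc
    _ = c := csInf_Ioi

theorem VaR_le_sSup_image_of_measure_compl_le [IsProbabilityMeasure P] (hδ : 0 < δ)
    {A : Set Ω} (hA : P Aᶜ ≤ ENNReal.ofReal (1 - δ)) (hbdd : BddAbove (Z '' A)) :
    VaR P δ Z ≤ sSup (Z '' A) := by
  have hP : ENNReal.ofReal (1 - δ) < P univ := by
    rw [measure_univ, ← ENNReal.ofReal_one]
    exact (ENNReal.ofReal_lt_ofReal_iff one_pos).mpr (by linarith)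
  refine VaR_le_of_forall_lt P Z hP fun t ht => (measure_mono fun ω hω hωA => ?_).trans hA
  exact (le_csSup hbdd (mem_image_of_mem Z hωA)).not_gt (ht.trans_le hω)

end ValueAtRisk

theorem VaR_expectation_less_conservative_than_DRO_general {n s : ℕ}
    (P₁ : Measure (Measure (Fin s → ℝ))) [IsProbabilityMeasure P₁]
    (X : Set (Fin n → ℝ)) (H : (Fin n → ℝ) → (Fin s → ℝ) → ℝ)
    (δ : ℝ) (hδ : δ ∈ Set.Ioo (0 : ℝ) 1)
    (FDR : Set (Measure (Fin s → ℝ)))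
    (hFDRcov : P₁ FDRᶜ ≤ ENNReal.ofReal (1 - δ))
    (xDR : Fin n → ℝ) (γV γDR : ℝ)
    (hVopt : ∀ x ∈ X, γV ≤ VaR P₁ δ (fun F => ∫ ξ, H x ξ ∂F))
    (hxDR : xDR ∈ X)
    (hbdd : BddAbove ((fun F => ∫ ξ, H xDR ξ ∂F) '' FDR))
    (hγDR : γDR = sSup ((fun F => ∫ ξ, H xDR ξ ∂F) '' FDR)) :
    γV ≤ γDR := by
  rw [hγDR]
  exact (hVopt xDR hxDR).trans
    (VaR_le_sSup_image_of_measure_compl_le P₁ _ hδ.1 hFDRcov hbdd)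

/-- let `(x*_VaR, γ*_VaR)` be optimal for the VaR-Expectation problem
`min_x VaR_δ(E_{ξ∼F}[H(x,ξ)])` (the randomness being the distribution `F ∼ P₁`) and let
`(x*_DR, γ*_DR)` be optimal for the distributionally robust problem
`min_x sup_{F ∈ F_DR} E_{ξ∼F}[H(x,ξ)]` where the fixed set `F_DR` has coverage `δ`,
i.e. `P₁(F ∉ F_DR) ≤ 1-δ`. Then `γ*_VaR ≤ γ*_DR`: the VaR-Expectation model is no more
conservative than the distributionally robust model. -/
theorem VaR_expectation_less_conservative_than_DRO {n s : ℕ}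
    (P₁ : Measure (Measure (Fin s → ℝ))) [IsProbabilityMeasure P₁]
    (X : Set (Fin n → ℝ)) (H : (Fin n → ℝ) → (Fin s → ℝ) → ℝ)
    (δ : ℝ) (hδ : δ ∈ Set.Ioo (0 : ℝ) 1)
    (FDR : Set (Measure (Fin s → ℝ))) (hFDRne : FDR.Nonempty)
    (hFDRcov : P₁ FDRᶜ ≤ ENNReal.ofReal (1 - δ))
    (xV xDR : Fin n → ℝ) (γV γDR : ℝ)
    (hxV : xV ∈ X) (hγV : γV = VaR P₁ δ (fun F => ∫ ξ, H xV ξ ∂F))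
    (hVopt : ∀ x ∈ X, γV ≤ VaR P₁ δ (fun F => ∫ ξ, H x ξ ∂F))
    (hxDR : xDR ∈ X)
    (hbdd : BddAbove ((fun F => ∫ ξ, H xDR ξ ∂F) '' FDR))
    (hγDR : γDR = sSup ((fun F => ∫ ξ, H xDR ξ ∂F) '' FDR))
    (hDRopt : ∀ x ∈ X, γDR ≤ sSup ((fun F => ∫ ξ, H x ξ ∂F) '' FDR)) :
    γV ≤ γDR :=
  VaR_expectation_less_conservative_than_DRO_general P₁ X H δ hδ FDR hFDRcov xDR γV γDR hVopt hxDR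
    hbdd hγDR
end

section
/- For any random variable Z with distribution P₁ and δ ∈ (0,1), VaR_δ(Z) = inf over measurable sets A with P₁(A^c) ≤ 1-δ of the essential supremum of Z on A (assuming Z restricted to A is bounded above). In particular, VaR_δ(Z) ≤ sup_{ω∈A} Z(ω) for any set A with P₁(A^c) ≤ 1-δ. -/
/-!
If `P(Aᶜ) ≤ 1 - δ`, every `t` above `sup Z(A)` satisfies `P(Z ≥ t) ≤ P(Aᶜ) ≤ 1 - δ`, so
`VaR_δ(Z) ≤ sup Z(A)`. Conversely, for every `t` with `P(Z ≥ t) ≤ 1 - δ` the set `A = {Z < t}`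
is admissible and `sup Z(A) ≤ t`. Hence `VaR_δ(Z)` is the greatest lower bound of the values
`sup Z(A)`. The assumption `0 < δ < 1` makes the defining set of `VaR` nonempty and bounded below,
so that the infimum is a genuine one.
-/

open MeasureTheory Set Filter

section

variable {Ω : Type*} [MeasurableSpace Ω] {μ : Measure Ω} {X : Ω → ℝ} {c : ENNReal}

lemma bddBelow_setOf_measure_le_le (hc : c < μ univ) :
    BddBelow {t : ℝ | μ {ω | t ≤ X ω} ≤ c} := by
  have hanti : Antitone fun t : ℝ => {ω | t ≤ X ω} := fun s t hst ω hω => hst.trans hω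
  have hunion : ⋃ t : ℝ, {ω | t ≤ X ω} = univ :=
    eq_univ_of_forall fun ω => mem_iUnion.2 ⟨X ω, le_refl (X ω)⟩
  have htends := tendsto_measure_iUnion_atBot (μ := μ) hanti
  rw [hunion] at htends
  obtain ⟨t₀, ht₀⟩ := eventually_atBot.1 (htends.eventually_const_lt hc)
  exact ⟨t₀, fun t ht => le_of_not_ge fun htt₀ => (ht₀ t htt₀).not_ge ht⟩

lemma nonempty_setOf_measure_le_le [IsFiniteMeasure μ] (hX : Measurable X) (hc : 0 < c) :
    {t : ℝ | μ {ω | t ≤ X ω} ≤ c}.Nonempty := by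
  have hanti : Antitone fun t : ℝ => {ω | t ≤ X ω} := fun s t hst ω hω => hst.trans hω
  have hinter : ⋂ t : ℝ, {ω | t ≤ X ω} = ∅ :=
    eq_empty_of_forall_notMem fun ω hω => (lt_add_one (X ω)).not_ge (mem_iInter.1 hω (X ω + 1))
  have htends := tendsto_measure_iInter_atTop (μ := μ)
    (fun t => (measurableSet_le measurable_const hX).nullMeasurableSet) hanti
    ⟨0, measure_ne_top μ _⟩
  rw [hinter, measure_empty] at htends
  obtain ⟨t, ht⟩ := (htends.eventually_lt_const hc).exists
  exact ⟨t, ht.le⟩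

variable {δ : ℝ} {A : Set Ω}

lemma VaR_le_sSup_image (hδ : ENNReal.ofReal (1 - δ) < μ univ)
    (hA : μ Aᶜ ≤ ENNReal.ofReal (1 - δ)) (hXA : BddAbove (X '' A)) :
    VaR μ δ X ≤ sSup (X '' A) := by
  refine le_of_forall_gt_imp_ge_of_dense fun t ht => csInf_le (bddBelow_setOf_measure_le_le hδ) ?_
  have hsub : {ω | t ≤ X ω} ⊆ Aᶜ := fun ω (hω : t ≤ X ω) hωA =>
    ht.not_ge (hω.trans (le_csSup hXA (mem_image_of_mem X hωA)))
  exact (measure_mono hsub).trans hA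

lemma exists_sSup_image_le_of_measure_le (hX : Measurable X) {t : ℝ}
    (hδ : ENNReal.ofReal (1 - δ) < μ univ) (ht : μ {ω | t ≤ X ω} ≤ ENNReal.ofReal (1 - δ)) :
    ∃ A : Set Ω, MeasurableSet A ∧ μ Aᶜ ≤ ENNReal.ofReal (1 - δ) ∧ A.Nonempty ∧
      BddAbove (X '' A) ∧ sSup (X '' A) ≤ t := by
  have hcompl : {ω | X ω < t}ᶜ = {ω | t ≤ X ω} := by ext; simp
  have hne : {ω | X ω < t}.Nonempty := by
    by_contra hempty
    rw [not_nonempty_iff_eq_empty.1 hempty, compl_empty] at hcompl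
    exact (hcompl ▸ ht).not_gt hδ
  have hbound : ∀ x ∈ X '' {ω | X ω < t}, x ≤ t := by
    rintro _ ⟨ω, hω, rfl⟩
    exact le_of_lt hω
  exact ⟨{ω | X ω < t}, measurableSet_lt hX measurable_const, hcompl ▸ ht, hne,
    ⟨t, hbound⟩, csSup_le (hne.image X) hbound⟩

end

/-- `VaR_δ(Z)` equals the infimum, over measurable sets `A` with
`P₁(Aᶜ) ≤ 1-δ` on which `Z` is bounded above, of the supremum of `Z` on `A`; in
particular `VaR_δ(Z) ≤ sup_{ω∈A} Z(ω)` for any such set `A`. -/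
theorem VaR_eq_inf_sup_over_coverage_sets {Ω : Type*} [MeasurableSpace Ω]
    (P₁ : Measure Ω) [IsProbabilityMeasure P₁] (Z : Ω → ℝ) (hZm : Measurable Z)
    (δ : ℝ) (hδ : δ ∈ Set.Ioo (0 : ℝ) 1) :
    VaR P₁ δ Z = sInf {r : ℝ | ∃ A : Set Ω, MeasurableSet A ∧
        P₁ Aᶜ ≤ ENNReal.ofReal (1 - δ) ∧ A.Nonempty ∧ BddAbove (Z '' A) ∧
        r = sSup (Z '' A)} ∧
      ∀ A : Set Ω, MeasurableSet A → P₁ Aᶜ ≤ ENNReal.ofReal (1 - δ) → A.Nonempty →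
        BddAbove (Z '' A) → VaR P₁ δ Z ≤ sSup (Z '' A) := by
  have hlt : ENNReal.ofReal (1 - δ) < P₁ univ := by
    rw [measure_univ, ENNReal.ofReal_lt_one]
    linarith [hδ.1]
  have hpos : 0 < ENNReal.ofReal (1 - δ) := ENNReal.ofReal_pos.2 (by linarith [hδ.2])
  have hle : ∀ A : Set Ω, MeasurableSet A → P₁ Aᶜ ≤ ENNReal.ofReal (1 - δ) → A.Nonempty →
      BddAbove (Z '' A) → VaR P₁ δ Z ≤ sSup (Z '' A) :=
    fun A _ hA _ hZA => VaR_le_sSup_image hlt hA hZA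
  refine ⟨?_, hle⟩
  have hS := nonempty_setOf_measure_le_le (μ := P₁) hZm hpos
  have hGLB : IsGLB {r : ℝ | ∃ A : Set Ω, MeasurableSet A ∧
      P₁ Aᶜ ≤ ENNReal.ofReal (1 - δ) ∧ A.Nonempty ∧ BddAbove (Z '' A) ∧
      r = sSup (Z '' A)} (VaR P₁ δ Z) := by
    refine ⟨?_, fun b hb => le_csInf hS fun t ht => ?_⟩
    · rintro _ ⟨A, hAm, hA, hne, hZA, rfl⟩
      exact hle A hAm hA hne hZA
    · obtain ⟨A, hAm, hA, hne, hZA, hAt⟩ := exists_sSup_image_le_of_measure_le hZm hlt ht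
      exact (hb ⟨A, hAm, hA, hne, hZA, rfl⟩).trans hAt
  obtain ⟨t, ht⟩ := hS
  obtain ⟨A, hAm, hA, hne, hZA, -⟩ := exists_sSup_image_le_of_measure_le hZm hlt ht
  exact (hGLB.csInf_eq ⟨_, A, hAm, hA, hne, hZA, rfl⟩).symm
end
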